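/- arXiv:2605.19979 — 8 statements merged into one kernel-verified Lean document; each statement's English description precedes it below -/
import Mathlib

section
/- Let σ be a linear extension of a finite modular lattice R with n elements, and let W be the n×n matrix with W_{i,j} = 1 if σ⁻¹(i) ≥ σ⁻¹(j) and 0 otherwise. Define A by A_{σ(y),σ(z)} = |{elements covering y}| if z = y, A_{σ(y),σ(z)} = −1 if y ⋖ z, and 0 otherwise; define B by B_{σ(w),σ(x)} = |{elements covered by x}| if w = x, B_{σ(w),σ(x)} = −1 if w ⋖ x, and 0 otherwise. Then AW = WB. -/
open Classical

/-- For a linear extension `σ` of a finite modular lattice `R`, with `W` the Cartan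
matrix of `R` with respect to `σ`, `A` the "up-cover" matrix and `B` the "down-cover"
matrix, we have `A * W = W * B`. -/
theorem stmt4 {R : Type*} [Lattice R] [Fintype R] [IsModularLattice R]
    {n : ℕ} (σ : R ≃ Fin n) (hσ : ∀ x y : R, x ≤ y → σ x ≤ σ y)
    (W A B : Matrix (Fin n) (Fin n) ℚ)
    (hW : ∀ i j : Fin n, W i j = if σ.symm j ≤ σ.symm i then 1 else 0)
    (hA : ∀ y z : R, A (σ y) (σ z) =
      if y = z then (Nat.card {c : R // y ⋖ c} : ℚ)
      else if y ⋖ z then -1 else 0)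
    (hB : ∀ w x : R, B (σ w) (σ x) =
      if w = x then (Nat.card {c : R // c ⋖ x} : ℚ)
      else if w ⋖ x then -1 else 0) :
    A * W = W * B := by
  classical
  ext i j
  obtain ⟨y, rfl⟩ := σ.surjective i
  obtain ⟨x, rfl⟩ := σ.surjective j
  rw [Matrix.mul_apply, Matrix.mul_apply,
    ← Equiv.sum_comp σ (fun k => A (σ y) k * W k (σ x)),
    ← Equiv.sum_comp σ (fun k => W (σ y) k * B k (σ x))]
  simp only [hA, hB, hW, Equiv.symm_apply_apply]
  set N : ℚ := (Nat.card {c : R // y ⋖ c} : ℚ) with hN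
  set M : ℚ := (Nat.card {c : R // c ⋖ x} : ℚ) with hM
  have hL : ∀ z : R,
      (if y = z then N else if y ⋖ z then -1 else 0) * (if x ≤ z then 1 else 0)
      = (if z = y ∧ x ≤ y then N else 0) - (if y ⋖ z ∧ x ≤ z then (1:ℚ) else 0) := by
    intro z
    by_cases h1 : y = z
    · subst h1
      have hc : ¬ (y ⋖ y) := fun h => lt_irrefl y h.lt
      by_cases h3 : x ≤ y <;> simp [hc, h3]
    · by_cases h2 : y ⋖ z <;> by_cases h3 : x ≤ z <;>
        simp [h1, h2, h3, Ne.symm h1]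
  have hR : ∀ w : R,
      (if w ≤ y then (1:ℚ) else 0) * (if w = x then M else if w ⋖ x then -1 else 0)
      = (if w = x ∧ x ≤ y then M else 0) - (if w ≤ y ∧ w ⋖ x then (1:ℚ) else 0) := by
    intro w
    by_cases h1 : w = x
    · subst h1
      have hc : ¬ (w ⋖ w) := fun h => lt_irrefl w h.lt
      by_cases h3 : w ≤ y <;> simp [hc, h3]
    · by_cases h2 : w ⋖ x <;> by_cases h3 : w ≤ y <;>
        simp [h1, h2, h3]
  rw [Finset.sum_congr rfl fun z _ => hL z, Finset.sum_congr rfl fun w _ => hR w,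
    Finset.sum_sub_distrib, Finset.sum_sub_distrib]
  have e1 : ∑ z : R, (if z = y ∧ x ≤ y then N else 0)
      = if x ≤ y then N else 0 := by
    by_cases h : x ≤ y
    · simp only [h, and_true, Finset.sum_ite_eq', Finset.mem_univ, if_pos]
    · simp [h]
  have e2 : ∑ w : R, (if w = x ∧ x ≤ y then M else 0)
      = if x ≤ y then M else 0 := by
    by_cases h : x ≤ y
    · simp only [h, and_true, Finset.sum_ite_eq', Finset.mem_univ, if_pos]
    · simp [h]
  rw [e1, e2, Finset.sum_boole, Finset.sum_boole]
  by_cases hxy : x ≤ y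
  · simp only [hxy, if_pos]
    have c1 : Finset.univ.filter (fun z : R => y ⋖ z ∧ x ≤ z)
        = Finset.univ.filter (fun z : R => y ⋖ z) := by
      apply Finset.filter_congr
      intro z _
      exact ⟨fun h => h.1, fun h => ⟨h, hxy.trans h.le⟩⟩
    have c2 : Finset.univ.filter (fun w : R => w ≤ y ∧ w ⋖ x)
        = Finset.univ.filter (fun w : R => w ⋖ x) := by
      apply Finset.filter_congr
      intro w _
      exact ⟨fun h => h.2, fun h => ⟨h.le.trans hxy, h⟩⟩
    have d1 : N = ((Finset.univ.filter (fun z : R => y ⋖ z)).card : ℚ) := by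
      rw [hN, Nat.card_eq_fintype_card, Fintype.card_subtype]
    have d2 : M = ((Finset.univ.filter (fun w : R => w ⋖ x)).card : ℚ) := by
      rw [hM, Nat.card_eq_fintype_card, Fintype.card_subtype]
    rw [c1, c2, d1, d2]
    ring
  · simp only [hxy, if_neg, not_false_iff]
    have hlt : y < x ⊔ y := lt_of_le_of_ne le_sup_right
      (fun h => hxy (le_sup_left.trans_eq h.symm))
    have hlt2 : x ⊓ y < x := lt_of_le_of_ne inf_le_left
      (fun h => hxy (h ▸ inf_le_right))
    have key : ∀ z : R, (y ⋖ z ∧ x ≤ z) ↔ (z = x ⊔ y ∧ y ⋖ x ⊔ y) := by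
      intro z
      constructor
      · rintro ⟨h1, h2⟩
        have hle : x ⊔ y ≤ z := sup_le h2 h1.le
        have hz : z = x ⊔ y := by
          rcases lt_or_eq_of_le hle with h | h
          · exact absurd h (h1.2 hlt)
          · exact h.symm
        exact ⟨hz, hz ▸ h1⟩
      · rintro ⟨rfl, h⟩; exact ⟨h, le_sup_left⟩
    have key2 : ∀ w : R, (w ≤ y ∧ w ⋖ x) ↔ (w = x ⊓ y ∧ x ⊓ y ⋖ x) := by
      intro w
      constructor
      · rintro ⟨h1, h2⟩
        have hle : w ≤ x ⊓ y := le_inf h2.le h1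
        have hw : w = x ⊓ y := by
          rcases lt_or_eq_of_le hle with h | h
          · exact absurd hlt2 (h2.2 h)
          · exact h
        exact ⟨hw, hw ▸ h2⟩
      · rintro ⟨rfl, h⟩; exact ⟨inf_le_right, h⟩
    have bridge : (y ⋖ x ⊔ y) ↔ (x ⊓ y ⋖ x) := by
      constructor
      · intro h
        have := inf_covBy_of_covBy_sup_left (a := y) (b := x) (by rwa [sup_comm] at h)
        rwa [inf_comm] at this
      · intro h
        have := covBy_sup_of_inf_covBy_right (a := y) (b := x) (by rwa [inf_comm] at h)
        rwa [sup_comm] at this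
    have c1 : Finset.univ.filter (fun z : R => y ⋖ z ∧ x ≤ z)
        = if y ⋖ x ⊔ y then {x ⊔ y} else (∅ : Finset R) := by
      ext z
      by_cases h : y ⋖ x ⊔ y <;> simp [key z, h]
    have c2 : Finset.univ.filter (fun w : R => w ≤ y ∧ w ⋖ x)
        = if x ⊓ y ⋖ x then {x ⊓ y} else (∅ : Finset R) := by
      ext w
      by_cases h : x ⊓ y ⋖ x <;> simp [key2 w, h]
    rw [c1, c2]
    by_cases h : y ⋖ x ⊔ y
    · have h' : x ⊓ y ⋖ x := bridge.mp h
      simp [h, h']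
    · have h' : ¬ (x ⊓ y ⋖ x) := fun hh => h (bridge.mpr hh)
      simp [h, h']
end

section
/- Fix a parking content b = (b₁,...,bₙ) (so b₁ ≤ ⋯ ≤ bₙ and bⱼ ≤ j for all j). Then the sum over all permutations w of Sₙ of t^{exced(π^{b,w})} equals Σ_{k≥0} rook_k(B_b)·(n−k)!·(t−1)^k, where π^{b,w} is the parking function with π_i = b_{w(i)}, exced counts indices i with π_i > i, B_b is the board {(r,c) : 1 ≤ r < b_c}, and rook_k(B_b) is the number of nonattacking k-rook placements on B_b. -/
/-!
Write `t ^ #(B ∩ graph w) = ((t - 1) + 1) ^ #(B ∩ graph w)` as a sum of `(t - 1) ^ #T` over the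
subsets `T` of `B ∩ graph w`, and exchange the sums: each `T ⊆ B` is then weighted by the number of
permutations whose graph contains `T`. This number is `0` unless `T` is a nonattacking placement,
and then it is `(n - #T)!`, since these permutations form a coset of the group of permutations
fixing the columns of `T` pointwise.
-/

open Polynomial Finset Equiv
open scoped Nat

section Rook

variable {α β : Type*}

def IsNonattacking (S : Finset (α × β)) : Prop :=
  ∀ p ∈ S, ∀ q ∈ S, p ≠ q → p.1 ≠ q.1 ∧ p.2 ≠ q.2

instance [DecidableEq α] [DecidableEq β] : DecidablePred (IsNonattacking (α := α) (β := β)) :=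
  fun S => by unfold IsNonattacking; infer_instance

theorem IsNonattacking.injOn_fst {S : Finset (α × β)} (h : IsNonattacking S) :
    Set.InjOn Prod.fst (S : Set (α × β)) :=
  fun p hp q hq hpq => by_contra fun hne => (h p hp q hq hne).1 hpq

theorem IsNonattacking.injOn_snd {S : Finset (α × β)} (h : IsNonattacking S) :
    Set.InjOn Prod.snd (S : Set (α × β)) :=
  fun p hp q hq hpq => by_contra fun hne => (h p hp q hq hne).2 hpq

theorem IsNonattacking.card_le [Fintype α] [DecidableEq α] {S : Finset (α × β)}
    (h : IsNonattacking S) : #S ≤ Fintype.card α :=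
  (Finset.card_image_of_injOn h.injOn_fst).symm.trans_le (card_le_univ _)

def rookNumber [DecidableEq α] [DecidableEq β] (B : Finset (α × β)) (k : ℕ) : ℕ :=
  #{S ∈ B.powerset | IsNonattacking S ∧ #S = k}

end Rook

namespace Equiv.Perm

variable {α : Type*} [Fintype α] [DecidableEq α]

def graph (w : Perm α) : Finset (α × α) := {p | w p.1 = p.2}

@[simp]
theorem mem_graph {w : Perm α} {p : α × α} : p ∈ w.graph ↔ w p.1 = p.2 := by
  simp [graph]

theorem card_inter_graph (B : Finset (α × α)) (w : Perm α) :
    #(B ∩ w.graph) = #{i | (i, w i) ∈ B} := by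
  refine card_bij' (fun p _ => p.1) (fun i _ => (i, w i)) ?_ ?_ ?_ ?_ <;>
    simp +contextual

theorem isNonattacking_of_subset_graph {w : Perm α} {T : Finset (α × α)} (hT : T ⊆ w.graph) :
    IsNonattacking T := by
  intro p hp q hq hpq
  have hwp := mem_graph.1 (hT hp)
  have hwq := mem_graph.1 (hT hq)
  constructor
  · exact fun h => hpq (Prod.ext h (by rw [← hwp, ← hwq, h]))
  · exact fun h => hpq (Prod.ext (w.injective (by rw [hwp, hwq, h])) h)

theorem exists_subset_graph {T : Finset (α × α)} (hT : IsNonattacking T) :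
    ∃ w : Perm α, T ⊆ w.graph := by
  classical
  let e := (Set.imageOfInjOn _ _ hT.injOn_fst).symm.trans (Set.imageOfInjOn _ _ hT.injOn_snd)
  refine ⟨e.extendSubtype, fun p hp => mem_graph.2 ?_⟩
  rw [extendSubtype_apply_of_mem e p.1 ⟨p, hp, rfl⟩]
  have hrow : (Set.imageOfInjOn _ _ hT.injOn_fst).symm ⟨p.1, ⟨p, hp, rfl⟩⟩ = ⟨p, hp⟩ := by
    rw [Equiv.symm_apply_eq]; rfl
  simp only [e, Equiv.trans_apply, hrow]
  rfl

theorem card_subset_graph {T : Finset (α × α)} (hT : IsNonattacking T) :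
    #{w : Perm α | T ⊆ w.graph} = (Fintype.card α - #T)! := by
  obtain ⟨w₀, hw₀⟩ := exists_subset_graph hT
  set R := T.image Prod.snd
  have hw₀inv : ∀ p ∈ T, w₀⁻¹ p.2 = p.1 := fun p hp => inv_eq_iff_eq.2 (mem_graph.1 (hw₀ hp)).symm
  have hcoset : ∀ w : Perm α, T ⊆ w.graph ↔ ∀ a, ¬a ∉ R → (w * w₀⁻¹) a = a := by
    refine fun w => ⟨fun h a ha => ?_, fun h p hp => mem_graph.2 ?_⟩
    · obtain ⟨p, hp, rfl⟩ := mem_image.1 (not_not.1 ha)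
      rw [mul_apply, hw₀inv p hp, mem_graph.1 (h hp)]
    · have hfix := h p.2 (not_not.2 (mem_image_of_mem _ hp))
      rwa [mul_apply, hw₀inv p hp] at hfix
  calc #{w : Perm α | T ⊆ w.graph}
      = Fintype.card {w : Perm α // T ⊆ w.graph} := (Fintype.card_subtype _).symm
    _ = Fintype.card {u : Perm α // ∀ a, ¬a ∉ R → u a = a} :=
        Fintype.card_congr ((Equiv.mulRight w₀⁻¹).subtypeEquiv hcoset)
    _ = Fintype.card (Perm {a // a ∉ R}) :=
        (Fintype.card_congr (Perm.subtypeEquivSubtypePerm _)).symm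
    _ = (Fintype.card α - #T)! := by
        rw [Fintype.card_perm, Fintype.card_subtype_compl, Fintype.card_coe,
          Finset.card_image_of_injOn hT.injOn_snd]

theorem card_subset_graph_eq_zero {T : Finset (α × α)} (hT : ¬IsNonattacking T) :
    #{w : Perm α | T ⊆ w.graph} = 0 :=
  card_eq_zero.2 <| filter_eq_empty_iff.2 fun _ _ h => hT (isNonattacking_of_subset_graph h)

end Equiv.Perm

section RookExpansion

theorem pow_card_eq_sum_powerset {ι R : Type*} [CommRing R] (F : Finset ι) (t : R) :
    t ^ #F = ∑ T ∈ F.powerset, (t - 1) ^ #T := by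
  simpa using (sum_pow_mul_eq_add_pow (t - 1) 1 F).symm

variable {α : Type*} [Fintype α] [DecidableEq α] {R : Type*} [CommRing R]

theorem sum_perm_pow_card_inter_graph (B : Finset (α × α)) (t : R) :
    ∑ w : Perm α, t ^ #(B ∩ w.graph)
      = ∑ T ∈ B.powerset with IsNonattacking T, ((Fintype.card α - #T)! : R) * (t - 1) ^ #T := by
  calc ∑ w : Perm α, t ^ #(B ∩ w.graph)
      = ∑ w : Perm α, ∑ T ∈ B.powerset, if T ⊆ w.graph then (t - 1) ^ #T else 0 := by
        refine sum_congr rfl fun w _ => ?_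
        rw [pow_card_eq_sum_powerset, ← sum_filter]
        congr 1
        ext T
        simp only [mem_filter, mem_powerset, subset_inter_iff]
    _ = ∑ T ∈ B.powerset, (#{w : Perm α | T ⊆ w.graph} : R) * (t - 1) ^ #T := by
        rw [sum_comm]
        refine sum_congr rfl fun T _ => ?_
        rw [← sum_filter, sum_const, nsmul_eq_mul]
    _ = _ := by
        rw [sum_filter]
        refine sum_congr rfl fun T _ => ?_
        split_ifs with hT
        · rw [Perm.card_subset_graph hT]
        · rw [Perm.card_subset_graph_eq_zero hT, Nat.cast_zero, zero_mul]

theorem sum_perm_pow_card_inter_graph_eq_sum_rookNumber (B : Finset (α × α)) (t : R) :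
    ∑ w : Perm α, t ^ #(B ∩ w.graph)
      = ∑ k ∈ range (Fintype.card α + 1),
          (rookNumber B k : R) * ((Fintype.card α - k)! : R) * (t - 1) ^ k := by
  rw [sum_perm_pow_card_inter_graph,
    ← sum_fiberwise_of_maps_to (g := card) (t := range (Fintype.card α + 1))
      fun T hT => mem_range_succ_iff.2 (mem_filter.1 hT).2.card_le]
  refine sum_congr rfl fun k _ => ?_
  rw [sum_congr rfl fun T hT => by rw [(mem_filter.1 hT).2], sum_const, nsmul_eq_mul, mul_assoc,
    rookNumber, filter_filter]

end RookExpansion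

theorem stmt7_general {n : ℕ} (b : Fin n → ℕ) :
    (∑ w : Equiv.Perm (Fin n),
        (X : ℤ[X]) ^ (Nat.card {i : Fin n // i.val + 1 < b (w i)}))
      = ∑ k ∈ Finset.range (n + 1),
          (Nat.card {S : Finset (Fin n × Fin n) //
              S.card = k ∧ (∀ p ∈ S, p.1.val + 1 < b p.2) ∧
              (∀ p ∈ S, ∀ q ∈ S, p ≠ q → p.1 ≠ q.1 ∧ p.2 ≠ q.2)} : ℤ[X])
            * (Nat.factorial (n - k) : ℤ[X]) * (X - 1) ^ k := by
  set B : Finset (Fin n × Fin n) := {p | p.1.val + 1 < b p.2}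
  have hexc (w : Perm (Fin n)) : Nat.card {i : Fin n // i.val + 1 < b (w i)} = #(B ∩ w.graph) := by
    rw [Perm.card_inter_graph]
    exact Nat.subtype_card _ fun i => by simp [B]
  have hrook (k : ℕ) : Nat.card {S : Finset (Fin n × Fin n) //
      S.card = k ∧ (∀ p ∈ S, p.1.val + 1 < b p.2) ∧
      (∀ p ∈ S, ∀ q ∈ S, p ≠ q → p.1 ≠ q.1 ∧ p.2 ≠ q.2)} = rookNumber B k := by
    refine Nat.subtype_card _ fun S => ?_
    rw [mem_filter, mem_powerset]
    simp only [subset_iff, B, mem_filter, mem_univ, true_and, IsNonattacking]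
    tauto
  simp only [hexc, hrook]
  simpa only [Fintype.card_fin] using sum_perm_pow_card_inter_graph_eq_sum_rookNumber B (X : ℤ[X])

/-- For a fixed parking content `b` (1-based: `b (j) ≤ j+1` for `j : Fin n`, weakly
increasing, positive), the generating function of strict excedances of `π^{b,w}`
over all permutations `w` equals `Σ_k rook_k(B_b) (n-k)! (t-1)^k`, where the board
`B_b` consists of cells `(r,c)` (0-based) with `r + 1 < b c`. -/
theorem stmt7 {n : ℕ} (b : Fin n → ℕ)
    (hmono : Monotone b) (hle : ∀ j : Fin n, b j ≤ j.val + 1) (hpos : ∀ j, 1 ≤ b j) :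
    (∑ w : Equiv.Perm (Fin n),
        (X : ℤ[X]) ^ (Nat.card {i : Fin n // i.val + 1 < b (w i)}))
      = ∑ k ∈ Finset.range (n + 1),
          (Nat.card {S : Finset (Fin n × Fin n) //
              S.card = k ∧ (∀ p ∈ S, p.1.val + 1 < b p.2) ∧
              (∀ p ∈ S, ∀ q ∈ S, p ≠ q → p.1 ≠ q.1 ∧ p.2 ≠ q.2)} : ℤ[X])
            * (Nat.factorial (n - k) : ℤ[X]) * (X - 1) ^ k :=
  stmt7_general b
end

section
/- Fix a parking content b of length n, let w ∈ Sₙ, let π^{b,w} be the parking function with π_i = b_{w(i)}, and let σ = oc(π^{b,w}) be its parking outcome. If i is a descent of σ (i.e., σ(i) > σ(i+1)), then σ(i+1) < b_{w(i)}. -/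
/-- `spot π i` is the (1-based) spot where the `i`-th car parks, under the standard
parking procedure where car `i` prefers spot `π i`: the smallest spot `s ≥ π i`
not occupied by any earlier car. -/
noncomputable def spot {n : ℕ} (π : Fin n → ℕ) (i : Fin n) : ℕ :=
  sInf {s : ℕ | π i ≤ s ∧ ∀ j : Fin n, j < i → spot π j ≠ s}
termination_by i.val
decreasing_by exact Fin.lt_iff_val_lt_val.mp (by assumption)

lemma spot_spec {n : ℕ} (π : Fin n → ℕ) (i : Fin n) :
    π i ≤ spot π i ∧ ∀ j : Fin n, j < i → spot π j ≠ spot π i := by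
  have hne : {s : ℕ | π i ≤ s ∧ ∀ j : Fin n, j < i → spot π j ≠ s}.Nonempty := by
    refine ⟨(Finset.univ.sup fun k : Fin n => spot π k) + π i + 1, by omega, ?_⟩
    intro j hj hcontra
    have := Finset.le_sup (f := fun k : Fin n => spot π k) (Finset.mem_univ j)
    omega
  have h := Nat.sInf_mem hne
  rw [spot]
  exact h

/-- If `b` is a parking content, `w ∈ Sₙ`, `π = π^{b,w}` and `σ = oc(π)`,
then every descent `i` of `σ` satisfies `σ(i+1) < b_{w(i)}`. -/
theorem stmt9 {n : ℕ} (b : Fin n → ℕ)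
    (hmono : Monotone b) (hle : ∀ j : Fin n, b j ≤ j.val + 1) (hpos : ∀ j, 1 ≤ b j)
    (w : Equiv.Perm (Fin n)) (i j : Fin n) (hij : j.val = i.val + 1)
    (hdes : spot (fun k => b (w k)) j < spot (fun k => b (w k)) i) :
    spot (fun k => b (w k)) j < b (w i) := by
  set π : Fin n → ℕ := fun k => b (w k) with hπ
  by_contra hcon
  push_neg at hcon
  have hji : i < j := Fin.lt_iff_val_lt_val.mpr (by omega)
  have hmem : spot π j ∈ {s : ℕ | π i ≤ s ∧ ∀ k : Fin n, k < i → spot π k ≠ s} := by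
    refine ⟨hcon, ?_⟩
    intro k hk
    exact ((spot_spec π j).2 k (hk.trans hji)).symm ∘ Eq.symm
  have : spot π i ≤ spot π j := by
    rw [spot]
    exact Nat.sInf_le hmem
  omega
end

section
/- Let π be a parking function of length n and σ ∈ Sₙ. Then oc(π) = σ if and only if ℓ_i(σ) ≤ π_i ≤ σ(i) for all 1 ≤ i ≤ n, where ℓ_i(σ) = 1 + max{r ∈ ℕ₀ \ {σ(1),...,σ(i−1)} : r < σ(i)} (with ℕ₀ the nonnegative integers). -/
lemma spot_set_nonempty {n : ℕ} (π : Fin n → ℕ) (i : Fin n) :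
    {s : ℕ | π i ≤ s ∧ ∀ j : Fin n, j < i → spot π j ≠ s}.Nonempty := by
  have hF : (spot π '' {j : Fin n | j < i}).Finite :=
    (Set.toFinite _).image _
  have hI : ({s : ℕ | π i ≤ s} \ (spot π '' {j : Fin n | j < i})).Infinite := by
    apply Set.Infinite.diff _ hF
    exact Set.Ici_infinite (π i)
  obtain ⟨s, hs1, hs2⟩ := hI.nonempty
  exact ⟨s, hs1, fun j hj hspot => hs2 ⟨j, hj, hspot⟩⟩

lemma spot_mem {n : ℕ} (π : Fin n → ℕ) (i : Fin n) :
    spot π i ∈ {s : ℕ | π i ≤ s ∧ ∀ j : Fin n, j < i → spot π j ≠ s} := by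
  rw [spot]
  exact Nat.sInf_mem (spot_set_nonempty π i)

/-- A parking function `π` has parking outcome `σ` (the `i`-th car parks in spot
`σ(i)`, here `(σ i).val + 1` in 1-based terms) if and only if
`ℓ_i(σ) ≤ π_i ≤ σ(i)` for all `i`, where
`ℓ_i(σ) = 1 + max {r ∈ ℕ₀ \ {σ(1),…,σ(i-1)} : r < σ(i)}`. -/
theorem stmt10 {n : ℕ} (π : Fin n → ℕ) (hpos : ∀ i, 1 ≤ π i)
    (hpf : ∃ g : Equiv.Perm (Fin n), Monotone (fun j => π (g j)) ∧
      ∀ j : Fin n, π (g j) ≤ j.val + 1)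
    (σ : Equiv.Perm (Fin n)) :
    (∀ i : Fin n, spot π i = (σ i).val + 1) ↔
      (∀ i : Fin n,
        (1 + sSup {r : ℕ | r < (σ i).val + 1 ∧
            ∀ j : Fin n, j < i → (σ j).val + 1 ≠ r}) ≤ π i
        ∧ π i ≤ (σ i).val + 1) := by
  constructor
  · intro h i
    set S := {r : ℕ | r < (σ i).val + 1 ∧ ∀ j : Fin n, j < i → (σ j).val + 1 ≠ r} with hS
    have hne : S.Nonempty := ⟨0, Nat.succ_pos _, fun j _ => Nat.succ_ne_zero _⟩
    have hbdd : BddAbove S := ⟨(σ i).val, fun r hr => Nat.lt_succ_iff.mp hr.1⟩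
    have hmem : sSup S ∈ S := Nat.sSup_mem hne hbdd
    have hsm := spot_mem π i
    refine ⟨?_, ?_⟩
    · by_contra hc
      push_neg at hc
      have hle : π i ≤ sSup S := by omega
      have : spot π i ≤ sSup S := by
        rw [spot]
        exact Nat.sInf_le ⟨hle, fun j hj => (h j) ▸ hmem.2 j hj⟩
      rw [h i] at this
      have := hmem.1
      omega
    · have := hsm.1
      rw [h i] at this
      exact this
  · intro h i
    have H : ∀ m : ℕ, ∀ i : Fin n, i.val = m → spot π i = (σ i).val + 1 := by
      intro m
      induction m using Nat.strong_induction_on with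
      | _ m ih =>
        intro i hi
        have IH : ∀ j : Fin n, j < i → spot π j = (σ j).val + 1 := fun j hj =>
          ih j.val (hi ▸ Fin.lt_iff_val_lt_val.mp hj) j rfl
        set S := {r : ℕ | r < (σ i).val + 1 ∧ ∀ j : Fin n, j < i → (σ j).val + 1 ≠ r} with hS
        have hne : S.Nonempty := ⟨0, Nat.succ_pos _, fun j _ => Nat.succ_ne_zero _⟩
        have hbdd : BddAbove S := ⟨(σ i).val, fun r hr => Nat.lt_succ_iff.mp hr.1⟩
        have hmemtop : (σ i).val + 1 ∈
            {s : ℕ | π i ≤ s ∧ ∀ j : Fin n, j < i → spot π j ≠ s} := by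
          refine ⟨(h i).2, fun j hj => ?_⟩
          rw [IH j hj]
          intro hc
          exact absurd (σ.injective (Fin.val_injective (by omega))) (ne_of_lt hj)
        have hle : spot π i ≤ (σ i).val + 1 := by
          rw [spot]; exact Nat.sInf_le hmemtop
        have hsm := spot_mem π i
        rcases lt_or_eq_of_le hle with hlt | heq
        · exfalso
          have hmemS : spot π i ∈ S := by
            refine ⟨hlt, fun j hj hc => ?_⟩
            exact hsm.2 j hj ((IH j hj).trans hc)
          have h1 : spot π i ≤ sSup S := le_csSup hbdd hmemS
          have h2 : 1 + sSup S ≤ π i := (h i).1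
          have h3 := hsm.1
          omega
        · exact heq
    exact H i.val i rfl
end

section
/- For σ ∈ Sₙ, the signed count Σ_{π : oc(π)=σ} (−1)^{cosum(π)} over parking functions π with parking outcome σ equals 1 if σ(i) ≡ ℓ_i(σ) (mod 2) for all i, and 0 otherwise. Here cosum(π) = C(n+1,2) − Σ π_i and ℓ_i(σ) = 1 + max{r ∈ ℕ₀ \ {σ(1),...,σ(i−1)} : r < σ(i)}. -/
open Classical

namespace Stmt11Aux

variable {n : ℕ} (σ : Equiv.Perm (Fin n))

/-- 1-based target spot of car `i`. -/
def spt (i : Fin n) : ℕ := (σ i).val + 1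

/-- spots `< spt i` free before car `i` arrives (assuming earlier cars at their spots). -/
def free (i : Fin n) : Set ℕ := {r : ℕ | r < spt σ i ∧ ∀ j : Fin n, j < i → spt σ j ≠ r}

/-- lower end of allowed preferences for car `i`. -/
noncomputable def ell (i : Fin n) : ℕ := 1 + sSup (free σ i)

lemma zero_mem_free (i : Fin n) : 0 ∈ free σ i :=
  ⟨Nat.succ_pos _, fun j _ => Nat.succ_ne_zero _⟩

lemma bddAbove_free (i : Fin n) : BddAbove (free σ i) :=
  ⟨spt σ i, fun _ hr => le_of_lt hr.1⟩

lemma sSup_free_mem (i : Fin n) : sSup (free σ i) ∈ free σ i :=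
  Nat.sSup_mem ⟨0, zero_mem_free σ i⟩ (bddAbove_free σ i)

lemma ell_le_spt (i : Fin n) : ell σ i ≤ spt σ i := by
  have := (sSup_free_mem σ i).1
  unfold ell; omega

lemma one_le_ell (i : Fin n) : 1 ≤ ell σ i := Nat.le_add_right 1 _

/-- Box ⇒ outcome. -/
lemma spot_eq_of_box (π : Fin n → ℕ)
    (h : ∀ i, ell σ i ≤ π i ∧ π i ≤ spt σ i) : ∀ i : Fin n, spot π i = spt σ i := by
  suffices H : ∀ m : ℕ, ∀ i : Fin n, i.val < m → spot π i = spt σ i by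
    exact fun i => H (i.val + 1) i (Nat.lt_succ_self _)
  intro m
  induction m with
  | zero => intro i hi; omega
  | succ m ih =>
    intro i hi
    rw [spot]
    have hset : {s : ℕ | π i ≤ s ∧ ∀ j : Fin n, j < i → spot π j ≠ s}
        = {s : ℕ | π i ≤ s ∧ ∀ j : Fin n, j < i → spt σ j ≠ s} := by
      ext x
      simp only [Set.mem_setOf_eq, and_congr_right_iff]
      intro _
      constructor <;> intro hx j hj <;>
        · have := ih j (lt_of_lt_of_le (Fin.lt_iff_val_lt_val.mp hj) (Nat.lt_succ_iff.mp hi))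
          have := hx j hj
          omega
    rw [hset]
    apply le_antisymm
    · apply Nat.sInf_le
      refine ⟨(h i).2, fun j hj => ?_⟩
      intro hc
      exact absurd (σ.injective (by
        have : (σ j).val = (σ i).val := by unfold spt at hc; omega
        exact Fin.ext this)) (ne_of_lt hj)
    · have hne2 : {s : ℕ | π i ≤ s ∧ ∀ j : Fin n, j < i → spt σ j ≠ s}.Nonempty :=
        ⟨spt σ i, (h i).2, fun j hj hc =>
          absurd (σ.injective (Fin.ext (by unfold spt at hc; omega))) (ne_of_lt hj)⟩
      apply le_csInf hne2
      intro x hx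
      by_contra hlt
      push_neg at hlt
      have hxfree : x ∈ free σ i := ⟨hlt, hx.2⟩
      have hle : x ≤ sSup (free σ i) := le_csSup (bddAbove_free σ i) hxfree
      have := (h i).1
      have := hx.1
      unfold ell at *
      omega

/-- Outcome ⇒ box. -/
lemma box_of_spot (π : Fin n → ℕ)
    (h : ∀ i : Fin n, spot π i = spt σ i) :
    ∀ i : Fin n, ell σ i ≤ π i ∧ π i ≤ spt σ i := by
  intro i
  have hrw : spot π i = sInf {s : ℕ | π i ≤ s ∧ ∀ j : Fin n, j < i → spt σ j ≠ s} := by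
    rw [spot]
    congr 1
    ext x
    simp only [Set.mem_setOf_eq, and_congr_right_iff]
    intro _
    constructor <;> intro hx j hj <;> · have := h j; have := hx j hj; omega
  have hne : {s : ℕ | π i ≤ s ∧ ∀ j : Fin n, j < i → spt σ j ≠ s}.Nonempty := by
    refine ⟨π i + n + 1, le_of_lt (by omega), fun j _ => ?_⟩
    have : (σ j).val < n := (σ j).isLt
    unfold spt; omega
  have hmem := Nat.sInf_mem hne
  rw [← hrw, h i] at hmem
  refine ⟨?_, hmem.1⟩
  -- ell ≤ π i
  by_contra hc
  push_neg at hc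
  set m := sSup (free σ i) with hm
  have hmfree := sSup_free_mem σ i
  have hmmem : m ∈ {s : ℕ | π i ≤ s ∧ ∀ j : Fin n, j < i → spt σ j ≠ s} := by
    refine ⟨?_, hmfree.2⟩
    unfold ell at hc; omega
  have := Nat.sInf_le hmmem
  rw [← hrw, h i] at this
  have := hmfree.1
  omega

lemma sorted_bound (π : Fin n → ℕ) (h : ∀ i, π i ≤ spt σ i) :
    ∀ j : Fin n, π (Tuple.sort π j) ≤ j.val + 1 := by
  intro j
  by_contra hc
  push_neg at hc
  set g := Tuple.sort π with hg
  have hmono : Monotone (π ∘ ⇑g) := Tuple.monotone_sort π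
  -- A = indices with small π
  set A : Finset (Fin n) := Finset.univ.filter (fun i => π i ≤ j.val + 1) with hA
  have h1 : (Finset.Iic j).image (⇑σ.symm) ⊆ A := by
    intro i hi
    simp only [Finset.mem_image, Finset.mem_Iic] at hi
    obtain ⟨k, hk, rfl⟩ := hi
    simp only [hA, Finset.mem_filter, Finset.mem_univ, true_and]
    have := h (σ.symm k)
    have hs : σ (σ.symm k) = k := σ.apply_symm_apply k
    unfold spt at this
    rw [hs] at this
    have : π (σ.symm k) ≤ k.val + 1 := this
    have := Fin.le_iff_val_le_val.mp hk
    omega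
  have hcard1 : j.val + 1 ≤ A.card := by
    calc j.val + 1 = ((Finset.Iic j).image (⇑σ.symm)).card := by
          rw [Finset.card_image_of_injective _ σ.symm.injective, Fin.card_Iic]
      _ ≤ A.card := Finset.card_le_card h1
  have h2 : A ⊆ (Finset.Iio j).image (⇑g) := by
    intro i hi
    simp only [hA, Finset.mem_filter, Finset.mem_univ, true_and] at hi
    simp only [Finset.mem_image, Finset.mem_Iio]
    refine ⟨g.symm i, ?_, g.apply_symm_apply i⟩
    by_contra hlt
    push_neg at hlt
    have : π (g j) ≤ π (g (g.symm i)) := hmono hlt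
    rw [g.apply_symm_apply] at this
    omega
  have hcard2 : A.card ≤ j.val := by
    calc A.card ≤ ((Finset.Iio j).image (⇑g)).card := Finset.card_le_card h2
      _ ≤ (Finset.Iio j).card := Finset.card_image_le
      _ = j.val := Fin.card_Iio j
  omega

lemma alt_sum (a d : ℕ) :
    (∑ k ∈ Finset.Icc a (a + d), (-1 : ℤ) ^ (a + d - k)) = if Even d then 1 else 0 := by
  induction d with
  | zero => simp [Finset.Icc_self]
  | succ d ih =>
    rw [show a + (d + 1) = (a + d) + 1 from rfl,
      Finset.sum_Icc_succ_top (by omega)]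
    have hterm : ∀ k ∈ Finset.Icc a (a + d),
        (-1 : ℤ) ^ (a + d + 1 - k) = -(-1 : ℤ) ^ (a + d - k) := by
      intro k hk
      simp only [Finset.mem_Icc] at hk
      rw [show a + d + 1 - k = (a + d - k) + 1 by omega, pow_succ]
      ring
    rw [Finset.sum_congr rfl hterm, Finset.sum_neg_distrib, ih]
    simp only [Nat.sub_self, pow_zero]
    rcases Nat.even_or_odd d with he | ho
    · rw [if_pos he, if_neg (by simp [Nat.even_add_one, he])]
      ring
    · have hne := Nat.not_even_iff_odd.mpr ho
      rw [if_neg hne, if_pos (by simp [Nat.even_add_one, hne])]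
      ring




lemma sum_spt : ∑ i : Fin n, spt σ i = Nat.choose (n + 1) 2 := by
  have h1 : ∑ i : Fin n, spt σ i = ∑ i : Fin n, (i.val + 1) := by
    unfold spt
    exact Equiv.sum_comp σ (fun k : Fin n => k.val + 1)
  have h2 : ∑ i : Fin n, (i.val + 1) = ∑ k ∈ Finset.range n, (k + 1) :=
    Fin.sum_univ_eq_sum_range (fun k => k + 1) n
  have h3 : ∑ k ∈ Finset.range n, (k + 1) = ∑ k ∈ Finset.range (n + 1), k := by
    rw [Finset.sum_range_succ' (fun k => k) n]; simp
  have h4 := Finset.sum_range_id_mul_two (n + 1)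
  have h5 := Nat.choose_two_right (n + 1)
  omega

lemma hfactor (i : Fin n) :
    (∑ k ∈ Finset.Icc (ell σ i) (spt σ i), (-1 : ℤ) ^ (spt σ i - k))
    = if spt σ i % 2 = ell σ i % 2 then 1 else 0 := by
  have hle := ell_le_spt σ i
  have hd : spt σ i = ell σ i + (spt σ i - ell σ i) := by omega
  rw [hd, alt_sum (ell σ i) (spt σ i - ell σ i)]
  have hev : Even (spt σ i - ell σ i) ↔ spt σ i % 2 = ell σ i % 2 := by
    rw [Nat.even_iff]; omega
  rw [← hd]
  rcases Nat.even_or_odd (spt σ i - ell σ i) with he | ho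
  · rw [if_pos he, if_pos (hev.mp he)]
  · rw [if_neg (Nat.not_even_iff_odd.mpr ho),
      if_neg (fun hc => (Nat.not_even_iff_odd.mpr ho) (hev.mpr hc))]

/-- The box condition is equivalent to the full parking condition. -/
lemma cond_iff (π : Fin n → ℕ) :
    ((∀ i, 1 ≤ π i) ∧
      (∃ g : Equiv.Perm (Fin n), Monotone (fun j => π (g j)) ∧
        ∀ j : Fin n, π (g j) ≤ j.val + 1) ∧
      (∀ i : Fin n, spot π i = (σ i).val + 1)) ↔
    (∀ i, ell σ i ≤ π i ∧ π i ≤ spt σ i) := by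
  constructor
  · intro h
    exact box_of_spot σ π h.2.2
  · intro h
    refine ⟨fun i => le_trans (one_le_ell σ i) (h i).1,
      ⟨Tuple.sort π, Tuple.monotone_sort π, sorted_bound σ π (fun i => (h i).2)⟩,
      spot_eq_of_box σ π h⟩

end Stmt11Aux

open Stmt11Aux

/-- For `σ ∈ Sₙ`, the signed count `Σ_{π : oc(π)=σ} (-1)^{cosum(π)}` over parking
functions `π` with outcome `σ` equals `1` if `σ(i) ≡ ℓ_i(σ) (mod 2)` for all `i`,
and `0` otherwise. -/
theorem stmt11 {n : ℕ} (σ : Equiv.Perm (Fin n)) :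
    (∑ᶠ π : Fin n → ℕ,
      (if ((∀ i, 1 ≤ π i) ∧
            (∃ g : Equiv.Perm (Fin n), Monotone (fun j => π (g j)) ∧
              ∀ j : Fin n, π (g j) ≤ j.val + 1) ∧
            (∀ i : Fin n, spot π i = (σ i).val + 1))
        then (-1 : ℤ) ^ (Nat.choose (n + 1) 2 - ∑ i, π i) else 0))
    = if (∀ i : Fin n, ((σ i).val + 1) % 2 =
          (1 + sSup {r : ℕ | r < (σ i).val + 1 ∧
              ∀ j : Fin n, j < i → (σ j).val + 1 ≠ r}) % 2)
      then 1 else 0 := by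
  classical
  set B : Finset (Fin n → ℕ) :=
    Fintype.piFinset (fun i => Finset.Icc (ell σ i) (spt σ i)) with hB
  have hsupp : Function.support (fun π : Fin n → ℕ =>
      (if ((∀ i, 1 ≤ π i) ∧
            (∃ g : Equiv.Perm (Fin n), Monotone (fun j => π (g j)) ∧
              ∀ j : Fin n, π (g j) ≤ j.val + 1) ∧
            (∀ i : Fin n, spot π i = (σ i).val + 1))
        then (-1 : ℤ) ^ (Nat.choose (n + 1) 2 - ∑ i, π i) else 0)) ⊆ ↑B := by
    intro π hπ
    simp only [Function.mem_support, ne_eq, ite_eq_right_iff, not_forall] at hπ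
    obtain ⟨hP, -⟩ := hπ
    have hbox := (cond_iff σ π).mp hP
    simp only [hB, Finset.coe_sort_coe, Finset.mem_coe, Fintype.mem_piFinset, Finset.mem_Icc]
    exact hbox
  rw [finsum_eq_finset_sum_of_support_subset _ hsupp]
  have hstep : ∀ π ∈ B,
      (if ((∀ i, 1 ≤ π i) ∧
            (∃ g : Equiv.Perm (Fin n), Monotone (fun j => π (g j)) ∧
              ∀ j : Fin n, π (g j) ≤ j.val + 1) ∧
            (∀ i : Fin n, spot π i = (σ i).val + 1))
        then (-1 : ℤ) ^ (Nat.choose (n + 1) 2 - ∑ i, π i) else 0)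
      = ∏ i : Fin n, (-1 : ℤ) ^ (spt σ i - π i) := by
    intro π hπ
    simp only [hB, Fintype.mem_piFinset, Finset.mem_Icc] at hπ
    rw [if_pos ((cond_iff σ π).mpr hπ)]
    rw [Finset.prod_pow_eq_pow_sum]
    congr 1
    rw [Finset.sum_tsub_distrib Finset.univ (fun i _ => (hπ i).2), sum_spt]
  have hps := Finset.prod_univ_sum (fun i => Finset.Icc (ell σ i) (spt σ i))
    (fun (i : Fin n) (k : ℕ) => (-1 : ℤ) ^ (spt σ i - k))
  rw [Finset.sum_congr rfl hstep, hB, ← hps]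
  rw [Finset.prod_congr rfl (fun i _ => hfactor σ i), Finset.prod_boole]
  have hiff : (∀ i ∈ Finset.univ, spt σ i % 2 = ell σ i % 2) ↔
      (∀ i : Fin n, ((σ i).val + 1) % 2 =
          (1 + sSup {r : ℕ | r < (σ i).val + 1 ∧
              ∀ j : Fin n, j < i → (σ j).val + 1 ≠ r}) % 2) := by
    constructor
    · intro h i; exact h i (Finset.mem_univ i)
    · intro h i _; exact h i
  split_ifs with h1 h2 h2
  · rfl
  · exact absurd (hiff.mp h1) h2
  · exact absurd (hiff.mpr h2) h1
  · rfl
end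

section
/- Define polynomials Aₙ(t) by the recurrence A_{n+1}(t) = (1 + n(t−1))Aₙ(t) + t(2−t)Aₙ′(t) with A₁(t) = 1, and polynomials Rₘ(x) by R_{m+1}(x) = (1 + mx)Rₘ(x) + x(1−2x)Rₘ′(x) with R₀(x) = 1. Then Aₙ(t) = t^{n−1}R_{n−1}(1/t) for all n ≥ 1; equivalently, the coefficient of t^{n−1−d} in Aₙ equals the coefficient of x^d in R_{n−1}. -/
open Polynomial

/-!
Writing `θ = X · d/dX` for the Euler operator, reflection `P ↦ X^N P(1/X)` conjugates `θ` into
`N - θ` on polynomials of degree at most `N`, and turns multiplication by `X` into a degree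
shift. Rewriting both recurrences in terms of `θ`, these two rules carry the `R`-recurrence at
step `m` to the `A`-recurrence at step `m + 1`, so `A (m + 1) = reflect m (R m)` by induction on `m`.
-/

namespace Polynomial

variable {R : Type*} [CommRing R]

noncomputable def stepA (n : ℕ) (Q : R[X]) : R[X] :=
  (1 + (n : R[X]) * (X - 1)) * Q + X * (2 - X) * derivative Q

noncomputable def stepR (m : ℕ) (P : R[X]) : R[X] :=
  (1 + (m : R[X]) * X) * P + X * (1 - 2 * X) * derivative P

lemma coeff_X_mul_derivative (P : R[X]) (j : ℕ) :
    (X * derivative P).coeff j = j * P.coeff j := by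
  cases j with
  | zero => simp
  | succ j => rw [coeff_X_mul, coeff_derivative]; push_cast; ring

lemma natDegree_X_mul_derivative_le (P : R[X]) : (X * derivative P).natDegree ≤ P.natDegree := by
  rw [natDegree_le_iff_coeff_eq_zero]
  intro j hj
  rw [coeff_X_mul_derivative, coeff_eq_zero_of_natDegree_lt hj, mul_zero]

lemma reflect_X_mul_derivative {N : ℕ} {P : R[X]} (hP : P.natDegree ≤ N) :
    reflect N (X * derivative P) = C (N : R) * reflect N P - X * derivative (reflect N P) := by
  ext j
  simp only [coeff_reflect, coeff_sub, coeff_C_mul, coeff_X_mul_derivative]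
  rcases le_or_gt j N with hj | hj
  · rw [revAt_le hj, Nat.cast_sub hj]; ring
  · rw [revAt_eq_self_of_lt hj, coeff_eq_zero_of_natDegree_lt (hP.trans_lt hj)]; ring

lemma reflect_succ {N : ℕ} {P : R[X]} (hP : P.natDegree ≤ N) :
    reflect (N + 1) P = X * reflect N P := by
  simpa [add_comm, reflect_one] using
    reflect_mul (1 : R[X]) P (natDegree_one.trans_le zero_le_one) hP

lemma reflect_succ_X_mul {N : ℕ} {P : R[X]} (hP : P.natDegree ≤ N) :
    reflect (N + 1) (X * P) = reflect N P := by
  simpa [add_comm] using reflect_mul (X : R[X]) P natDegree_X_le hP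

lemma natDegree_stepR_le {m : ℕ} {P : R[X]} (hP : P.natDegree ≤ m) :
    (stepR m P).natDegree ≤ m + 1 := by
  have hθ := (natDegree_X_mul_derivative_le P).trans hP
  have h₁ : (1 + (m : R[X]) * X).natDegree ≤ 1 := by compute_degree
  have h₂ : (1 - 2 * X : R[X]).natDegree ≤ 1 := by compute_degree
  have e : stepR m P = (1 + (m : R[X]) * X) * P + (1 - 2 * X) * (X * derivative P) := by
    unfold stepR; ring
  rw [e, add_comm m]
  exact natDegree_add_le_of_degree_le (natDegree_mul_le_of_le h₁ hP) (natDegree_mul_le_of_le h₂ hθ)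

theorem reflect_stepR {m : ℕ} {P : R[X]} (hP : P.natDegree ≤ m) :
    reflect (m + 1) (stepR m P) = stepA (m + 1) (reflect m P) := by
  have hθ := (natDegree_X_mul_derivative_le P).trans hP
  have e : stepR m P = P + X * derivative P + C (m : R) * (X * P) - C 2 * (X * (X * derivative P)) := by
    unfold stepR; rw [C_eq_natCast, map_ofNat]; ring
  rw [e, reflect_sub, reflect_add, reflect_add, reflect_C_mul, reflect_C_mul, reflect_succ hP,
    reflect_succ hθ, reflect_succ_X_mul hP, reflect_succ_X_mul hθ, reflect_X_mul_derivative hP,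
    stepA, C_eq_natCast, map_ofNat]
  push_cast
  ring

end Polynomial

/-- With `A_{n+1} = (1 + n(t-1)) Aₙ + t(2-t) Aₙ'`, `A₁ = 1`, and
`R_{m+1} = (1 + m x) Rₘ + x(1-2x) Rₘ'`, `R₀ = 1`, we have
`Aₙ(t) = t^{n-1} R_{n-1}(1/t)` for all `n ≥ 1`. -/
theorem stmt13 (A R : ℕ → Polynomial ℚ)
    (hA1 : A 1 = 1)
    (hArec : ∀ n : ℕ, 1 ≤ n →
      A (n + 1) = (1 + (n : ℚ[X]) * (X - 1)) * A n
        + X * (2 - X) * Polynomial.derivative (A n))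
    (hR0 : R 0 = 1)
    (hRrec : ∀ m : ℕ,
      R (m + 1) = (1 + (m : ℚ[X]) * X) * R m
        + X * (1 - 2 * X) * Polynomial.derivative (R m)) :
    ∀ n : ℕ, 1 ≤ n → A n = (R (n - 1)).reflect (n - 1) := by
  have h : ∀ m, (R m).natDegree ≤ m ∧ A (m + 1) = reflect m (R m) := by
    intro m
    induction m with
    | zero => simp [hA1, hR0, reflect_one]
    | succ m ih =>
      obtain ⟨hdeg, hA⟩ := ih
      rw [hRrec, hArec (m + 1) m.succ_pos, hA]
      exact ⟨natDegree_stepR_le hdeg, (reflect_stepR hdeg).symm⟩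
  intro n hn
  obtain ⟨m, rfl⟩ := Nat.exists_eq_add_of_le' hn
  simpa using (h m).2
end

section
/- Let E(z) = Σ_{n≥0} cₙ(t) zⁿ/n! be the exponential generating function determined by the system E₊′ = t·E₊·E₋, E₋′ = E₊·(1−t+t·E₊), E₊(0)=1, E₋(0)=0, where E₊ and E₋ are the even and odd parts of E. Then W(z)² − t²E₋(z)² = 1, where W(z) = 1 − t + t·E₊(z). -/
/-!
`W² - t² E₋²` is a first integral of the system: using `W' = t E₊' = t² E₊ E₋` and
`E₋' = E₊ W`, its derivative is `2 W t² E₊ E₋ - 2 t² E₋ E₊ W = 0`. Over a torsion-free ring a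
power series with zero derivative is its constant term, which is `1² - 0 = 1` here.
-/

open PowerSeries

section FirstIntegral

variable {R : Type*} [CommRing R] (c : R) {P M : R⟦X⟧}

theorem derivative_first_integral_eq_zero
    (hP : d⁄dX R P = C c * (P * M)) (hM : d⁄dX R M = P * (1 - C c + C c * P)) :
    d⁄dX R ((1 - C c + C c * P) ^ 2 - C c ^ 2 * M ^ 2) = 0 := by
  simp only [map_sub, map_add, derivative_C, Derivation.map_one_eq_zero,
    Derivation.leibniz, Derivation.leibniz_pow, smul_eq_mul, hP, hM]
  ring

theorem first_integral_eq_one [IsAddTorsionFree R]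
    (hP : d⁄dX R P = C c * (P * M)) (hM : d⁄dX R M = P * (1 - C c + C c * P))
    (hP0 : constantCoeff P = 1) (hM0 : constantCoeff M = 0) :
    (1 - C c + C c * P) ^ 2 - C c ^ 2 * M ^ 2 = 1 := by
  refine derivative.ext ?_ ?_
  · rw [derivative_first_integral_eq_zero c hP hM, Derivation.map_one_eq_zero]
  · simp [hP0, hM0]

end FirstIntegral

theorem stmt18_general (Ep Em : PowerSeries (RatFunc ℚ))
    (t : RatFunc ℚ)
    (hEp' : PowerSeries.derivative (R := RatFunc ℚ) Ep
      = PowerSeries.C t * (Ep * Em))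
    (hEm' : PowerSeries.derivative (R := RatFunc ℚ) Em
      = Ep * (1 - PowerSeries.C t + PowerSeries.C t * Ep))
    (h0p : PowerSeries.constantCoeff Ep = 1)
    (h0m : PowerSeries.constantCoeff Em = 0) :
    (1 - PowerSeries.C t + PowerSeries.C t * Ep) ^ 2
      - (PowerSeries.C t) ^ 2 * Em ^ 2 = 1 :=
  first_integral_eq_one t hEp' hEm' h0p h0m

/-- If `E` is a formal power series over `ℚ(t)` whose even and odd parts `E₊, E₋`
satisfy `E₊' = t E₊ E₋`, `E₋' = E₊ (1 - t + t E₊)`, `E₊(0) = 1`, `E₋(0) = 0`,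
then `W² - t² E₋² = 1` where `W = 1 - t + t E₊`. -/
theorem stmt18 (E Ep Em : PowerSeries (RatFunc ℚ))
    (t : RatFunc ℚ) (ht : t = RatFunc.X)
    (hEp : Ep = (E + PowerSeries.rescale (-1) E) * PowerSeries.C (2⁻¹ : RatFunc ℚ))
    (hEm : Em = (E - PowerSeries.rescale (-1) E) * PowerSeries.C (2⁻¹ : RatFunc ℚ))
    (hEp' : PowerSeries.derivative (R := RatFunc ℚ) Ep
      = PowerSeries.C t * (Ep * Em))
    (hEm' : PowerSeries.derivative (R := RatFunc ℚ) Em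
      = Ep * (1 - PowerSeries.C t + PowerSeries.C t * Ep))
    (h0p : PowerSeries.constantCoeff Ep = 1)
    (h0m : PowerSeries.constantCoeff Em = 0) :
    (1 - PowerSeries.C t + PowerSeries.C t * Ep) ^ 2
      - (PowerSeries.C t) ^ 2 * Em ^ 2 = 1 :=
  stmt18_general Ep Em t hEp' hEm' h0p h0m
end

section
/- Let n ≥ 1 and let σ be a permutation in Sₙ. Define ℓ_i(σ) = 1 + max{r ∈ {0,1,...,n} \ {σ(1),...,σ(i−1)} : r < σ(i)}. Define τ = σ⁻¹ and, for p ∈ [n], α_τ(p) = max({j : j < p, τ(j) > τ(p)} ∪ {0}). Then for every i, ℓ_i(σ) = α_{σ⁻¹}(σ(i)) + 1. -/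
/-- For `σ ∈ Sₙ` (encoded 1-based: position `i+1` maps to spot `s (i+1) = σ(i)+1`,
with inverse `τ`), the quantity `ℓ_i(σ) = 1 + max {r ∈ {0,…,n} \ {σ(1),…,σ(i-1)} : r < σ(i)}`
satisfies `ℓ_i(σ) = α_{σ⁻¹}(σ(i)) + 1`, where
`α_τ(p) = max ({j : j < p, τ(j) > τ(p)} ∪ {0})`. -/
theorem stmt19 {n : ℕ} (hn : 1 ≤ n) (σ : Equiv.Perm (Fin n))
    (s τ : ℕ → ℕ)
    (hs : ∀ i : Fin n, s (i.val + 1) = (σ i).val + 1)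
    (hτ : ∀ i : Fin n, τ ((σ i).val + 1) = i.val + 1)
    (ℓ α : ℕ → ℕ)
    (hℓ : ∀ i : Fin n, ℓ (i.val + 1) =
      1 + sSup {r : ℕ | r ≤ n ∧ r < s (i.val + 1) ∧
          ∀ j : Fin n, j.val < i.val → s (j.val + 1) ≠ r})
    (hα : ∀ p : Fin n, α (p.val + 1) =
      sSup ({j : ℕ | j < p.val + 1 ∧ τ (p.val + 1) < τ j} ∪ {0})) :
    ∀ i : Fin n, ℓ (i.val + 1) = α ((σ i).val + 1) + 1 := by
  intro i
  rw [hℓ i, hα (σ i), Nat.add_comm]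
  congr 1
  congr 1
  ext r
  simp only [Set.mem_setOf_eq, Set.mem_union, Set.mem_singleton_iff, hs]
  constructor
  · rintro ⟨hrn, hrlt, hj⟩
    rcases Nat.eq_zero_or_pos r with h0 | hpos
    · right; exact h0
    · left
      refine ⟨hrlt, ?_⟩
      have hr1 : r - 1 < n := by omega
      set k : Fin n := σ.symm ⟨r - 1, hr1⟩ with hk
      have hσk : (σ k).val = r - 1 := by simp [hk]
      have hτr : τ r = k.val + 1 := by
        have := hτ k
        rwa [hσk, Nat.sub_add_cancel hpos] at this
      rw [hτ i, hτr]
      have hki : i.val < k.val := by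
        rcases lt_trichotomy k.val i.val with h | h | h
        · exact absurd (by omega : (σ k).val + 1 = r) (hj k h)
        · exfalso
          have : k = i := Fin.ext h
          rw [this] at hσk; omega
        · exact h
      omega
  · rintro (⟨hrlt, hτlt⟩ | h0)
    · rcases Nat.eq_zero_or_pos r with h0 | hpos
      · subst h0; exact ⟨by omega, by omega, fun j _ => by omega⟩
      · have hr1 : r - 1 < n := by omega
        set k : Fin n := σ.symm ⟨r - 1, hr1⟩ with hk
        have hσk : (σ k).val = r - 1 := by simp [hk]
        have hτr : τ r = k.val + 1 := by
          have := hτ k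
          rwa [hσk, Nat.sub_add_cancel hpos] at this
        rw [hτ i, hτr] at hτlt
        refine ⟨by omega, hrlt, fun j hji hje => ?_⟩
        have : j = k := σ.injective (Fin.ext (by omega : (σ j).val = (σ k).val))
        omega
    · subst h0; exact ⟨by omega, by omega, fun j _ => by omega⟩
end
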